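/- arXiv:math/0401226 — 2 statements merged into one kernel-verified Lean document; each statement's English description precedes it below -/
import Mathlib

section
/- Let g be a finite-dimensional real Lie algebra with a nondegenerate invariant symmetric bilinear form ⟨,⟩, and let R : g → g be a skew-symmetric linear operator (⟨R X, Y⟩ = −⟨X, R Y⟩). Define R± = R ± (1/2)·id. Then the subspace g* = {(R⁺(X), R⁻(X)) : X ∈ g} of g ⊕ g has dimension equal to dim g, and g* intersects the diagonal subalgebra g^δ = {(X,X) : X ∈ g} trivially, so that g ⊕ g = g^δ ⊕ g* as vector spaces. -/
/-- For a finite-dimensional real quadratic Lie algebra `g` and a skew-symmetric operator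
`R`, with `R± = R ± (1/2)·id`, the subspace `g* = {(R⁺X, R⁻X)}` of `g ⊕ g` has dimension
`dim g`, meets the diagonal `g^δ` trivially, and `g ⊕ g = g^δ ⊕ g*`. -/
theorem stmt_4 (g : Type) [LieRing g] [LieAlgebra ℝ g] [Module.Finite ℝ g]
    (B : LinearMap.BilinForm ℝ g)
    (hsymm : ∀ x y, B x y = B y x)
    (hinv : ∀ x y z, B ⁅x, y⁆ z = B x ⁅y, z⁆)
    (hnd : B.Nondegenerate)
    (R : g →ₗ[ℝ] g)
    (hskew : ∀ x y, B (R x) y = - B x (R y)) :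
    Module.finrank ℝ
        (LinearMap.range ((R + (1/2 : ℝ) • LinearMap.id).prod (R - (1/2 : ℝ) • LinearMap.id)))
      = Module.finrank ℝ g ∧
    (LinearMap.range ((R + (1/2 : ℝ) • LinearMap.id).prod (R - (1/2 : ℝ) • LinearMap.id)) ⊓
      LinearMap.range ((LinearMap.id : g →ₗ[ℝ] g).prod LinearMap.id)) = ⊥ ∧
    IsCompl
      (LinearMap.range ((LinearMap.id : g →ₗ[ℝ] g).prod LinearMap.id))
      (LinearMap.range ((R + (1/2 : ℝ) • LinearMap.id).prod (R - (1/2 : ℝ) • LinearMap.id))) := by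
  set P := (R + (1/2 : ℝ) • LinearMap.id).prod (R - (1/2 : ℝ) • LinearMap.id) with hP
  set D := (LinearMap.id : g →ₗ[ℝ] g).prod LinearMap.id with hD
  have hPinj : Function.Injective P := by
    rw [← LinearMap.ker_eq_bot, LinearMap.ker_eq_bot']
    intro x hx
    rw [hP, LinearMap.prod_apply, Prod.mk_eq_zero] at hx
    obtain ⟨h1, h2⟩ := hx
    simp only [LinearMap.prod_apply, Function.prod, LinearMap.add_apply, LinearMap.sub_apply,
      LinearMap.smul_apply, LinearMap.id_apply] at h1 h2
    have : x = (R x + (1/2 : ℝ) • x) - (R x - (1/2 : ℝ) • x) := by module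
    rw [h1, h2, sub_zero] at this
    exact this
  have hDinj : Function.Injective D := by
    intro x y hxy
    simpa [hD] using congrArg Prod.fst hxy
  have hdimP : Module.finrank ℝ (LinearMap.range P) = Module.finrank ℝ g :=
    LinearMap.finrank_range_of_inj hPinj
  have hdimD : Module.finrank ℝ (LinearMap.range D) = Module.finrank ℝ g :=
    LinearMap.finrank_range_of_inj hDinj
  have hdisj : Disjoint (LinearMap.range D) (LinearMap.range P) := by
    rw [Submodule.disjoint_def]
    rintro v ⟨y, rfl⟩ ⟨x, hx⟩
    have h1 : R x + (1/2 : ℝ) • x = y := congrArg Prod.fst hx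
    have h2 : R x - (1/2 : ℝ) • x = y := congrArg Prod.snd hx
    have hx0 : x = 0 := by
      have : x = (R x + (1/2 : ℝ) • x) - (R x - (1/2 : ℝ) • x) := by module
      rw [h1, h2, sub_self] at this
      exact this
    simp [hD, ← hx, hx0]
    simpa [hx0] using h1.symm
  have hinf : LinearMap.range P ⊓ LinearMap.range D = ⊥ := by
    rw [inf_comm]
    exact disjoint_iff.mp hdisj
  refine ⟨hdimP, hinf, ⟨hdisj, ?_⟩⟩
  rw [codisjoint_iff]
  apply Submodule.eq_top_of_disjoint _ _ _ hdisj
  rw [hdimP, hdimD, Module.finrank_prod]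
end

section
/- Let R : g → g be a skew endomorphism of a Lie algebra g with invariant bilinear form, satisfying the modified classical Yang–Baxter relation: [R X, R Y] − R([R X, Y] + [X, R Y]) = −ν²·[X, Y] for all X, Y, for a constant ν. Define R± = R ± ν·id. Then the bracket [X, Y]_R := [R X, Y] + [X, R Y] makes g into a Lie algebra, and both R⁺ and R⁻ are Lie algebra homomorphisms from (g, [,]_R) to (g, [,]). -/
/-- The `R`-bracket `[X, Y]_R := [R X, Y] + [X, R Y]`. -/
def rBracket {K : Type} {g : Type} [Field K] [LieRing g] [LieAlgebra K g]
    (R : g →ₗ[K] g) (X Y : g) : g := ⁅R X, Y⁆ + ⁅X, R Y⁆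

lemma jac3 {g : Type} [LieRing g] (a b c : g) :
    ⁅⁅a, b⁆, c⁆ + ⁅⁅b, c⁆, a⁆ + ⁅⁅c, a⁆, b⁆ = 0 := by
  rw [← lie_skew ⁅a, b⁆ c, ← lie_skew ⁅b, c⁆ a, ← lie_skew ⁅c, a⁆ b]
  linear_combination (norm := module) - lie_jacobi a b c

/-- If `R` satisfies the modified classical Yang–Baxter equation
`[RX, RY] − R([RX,Y] + [X,RY]) = −ν²[X,Y]`, then `[,]_R` is a Lie bracket on `g` and
`R± = R ± ν·id` are Lie algebra homomorphisms from `(g, [,]_R)` to `(g, [,])`. -/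
theorem stmt_6 (K : Type) [Field K] [CharZero K] (g : Type) [LieRing g] [LieAlgebra K g]
    (R : g →ₗ[K] g) (ν : K)
    (hmcybe : ∀ X Y : g, ⁅R X, R Y⁆ - R (⁅R X, Y⁆ + ⁅X, R Y⁆) = -(ν ^ 2) • ⁅X, Y⁆) :
    (∀ X Y : g, rBracket R X Y = - rBracket R Y X) ∧
    (∀ X Y Z : g,
      rBracket R (rBracket R X Y) Z + rBracket R (rBracket R Y Z) X
        + rBracket R (rBracket R Z X) Y = 0) ∧
    (∀ X Y : g, ((R + ν • LinearMap.id : g →ₗ[K] g)) (rBracket R X Y)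
        = ⁅((R + ν • LinearMap.id : g →ₗ[K] g)) X, ((R + ν • LinearMap.id : g →ₗ[K] g)) Y⁆) ∧
    (∀ X Y : g, ((R - ν • LinearMap.id : g →ₗ[K] g)) (rBracket R X Y)
        = ⁅((R - ν • LinearMap.id : g →ₗ[K] g)) X, ((R - ν • LinearMap.id : g →ₗ[K] g)) Y⁆) := by
  have key : ∀ X Y : g, R (⁅R X, Y⁆ + ⁅X, R Y⁆) = ⁅R X, R Y⁆ + (ν ^ 2) • ⁅X, Y⁆ := by
    intro X Y
    have h := hmcybe X Y
    rw [neg_smul] at h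
    linear_combination (norm := module) -h
  refine ⟨?_, ?_, ?_, ?_⟩
  · intro X Y
    simp only [rBracket, ← lie_skew (R Y) X, ← lie_skew Y (R X)]
    abel
  · intro X Y Z
    simp only [rBracket, key, add_lie, lie_add, smul_lie]
    have e1 := jac3 (R X) (R Y) Z
    have e2 := jac3 (R Y) (R Z) X
    have e3 := jac3 (R Z) (R X) Y
    have e4 := jac3 X Y Z
    linear_combination (norm := module) e1 + e2 + e3 + (ν ^ 2 : K) • e4
  · intro X Y
    simp only [rBracket, LinearMap.add_apply, LinearMap.smul_apply, LinearMap.id_apply,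
      key, lie_add, add_lie, smul_lie, lie_smul, smul_smul]
    module
  · intro X Y
    simp only [rBracket, LinearMap.sub_apply, LinearMap.smul_apply, LinearMap.id_apply,
      key, lie_add, add_lie, smul_lie, lie_smul, smul_smul, sub_lie, lie_sub]
    module
end
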